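/- Let T^α_I be a general compatible embedding from NN({m_l}_{l=0}^L) to a wider NN({m'_l}_{l=0}^L), with total index mapping I and coefficients α satisfying compatibility conditions I and II. Then: (i) T^α_I is injective; (ii) T^α_I is affine, i.e., θ ↦ T^α_I(θ) − T^α_I(0) is linear; (iii) for any data S, loss ℓ, and activation σ (each differentiable), every critical point of the narrow network's empirical risk is mapped by T^α_I to a critical point of the wider network's empirical risk. -/

import Mathlib

/-!
The embedded network reproduces the narrow one neuron by neuron. By induction over the layers,
a wide neuron `j` with `I l j = some s` carries the feature of narrow neuron `s`, and a null
neuron (`I l j = none`) the constant `σ (bstar l j)`: by the forward part of condition I the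
coefficients `A` into a wide neuron sum to one over every fibre of `I` (to zero into a null
neuron), and condition II absorbs the null inputs into the biases. Dually, by backward induction
using the backward part of condition I, the backpropagated error of a wide neuron is `β` times
the error of its image, and zero on a null neuron.

The partial derivatives of the risk are averages of "error times feature" (forward-mode
differentiation along one coordinate, transposed by backpropagation). Hence each partial
derivative of the wide risk at the embedded point is `β` times a partial derivative of the narrow
risk (for a weight leaving a null neuron: `β * σ (bstar l j)` times a bias derivative), so it
vanishes at a critical point. Injectivity: a narrow weight `W_{st}` is the sum of the wide
weights from the fibre of `t` into any copy of `s`. Affinity is read off the formula for `genEmb`.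
-/

namespace EmbeddingPrinciple

/-- Parameters of a fully-connected NN: `(θ l).1 i j` is the weight `W^{[l+1]}_{ij}`
and `(θ l).2 i` is the bias `b^{[l+1]}_i` (the paper's layer `l` corresponds to index `l-1`).
Only the coordinates below the widths are meaningful for a concrete architecture. -/
abbrev NNParams : Type := ℕ → (ℕ → ℕ → ℝ) × (ℕ → ℝ)

/-- Feature vectors `f^{[l]}` (entrywise activation `σ`); `m` is the width function. -/
noncomputable def feat (σ : ℝ → ℝ) (m : ℕ → ℕ) (θ : NNParams) (x : ℕ → ℝ) : ℕ → ℕ → ℝ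
  | 0 => x
  | l + 1 => fun i =>
      σ ((∑ j ∈ Finset.range (m l), (θ l).1 i j * feat σ m θ x l j) + (θ l).2 i)

/-- Pre-activation of layer `l+1`: `W^{[l+1]} f^{[l]} + b^{[l+1]}`. -/
noncomputable def preact (σ : ℝ → ℝ) (m : ℕ → ℕ) (θ : NNParams) (x : ℕ → ℝ) (l i : ℕ) : ℝ :=
  (∑ j ∈ Finset.range (m l), (θ l).1 i j * feat σ m θ x l j) + (θ l).2 i

/-- Output `f_θ` of the `(K+1)`-layer network (the paper's `L` is `K+1`). -/
noncomputable def nnOut (σ : ℝ → ℝ) (m : ℕ → ℕ) (K : ℕ) (θ : NNParams) (x : ℕ → ℝ) :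
    ℕ → ℝ := fun i => preact σ m θ x K i

/-- Feature gradient `g^{[l+1]} = σ'(W^{[l+1]} f^{[l]} + b^{[l+1]})`. -/
noncomputable def gFeat (σ : ℝ → ℝ) (m : ℕ → ℕ) (θ : NNParams) (x : ℕ → ℝ) (l i : ℕ) : ℝ :=
  deriv σ (preact σ m θ x l i)

/-- Output truncated to the valid output coordinates. -/
noncomputable def truncOut (σ : ℝ → ℝ) (m : ℕ → ℕ) (K : ℕ) (θ : NNParams) (x : ℕ → ℝ) :
    ℕ → ℝ := fun i => if i < m (K + 1) then nnOut σ m K θ x i else 0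

/-- Empirical risk `R_S(θ) = (1/n) ∑ᵢ ℓ(f_θ(xᵢ), yᵢ)`. -/
noncomputable def risk (σ : ℝ → ℝ) (m : ℕ → ℕ) (K : ℕ)
    (loss : (ℕ → ℝ) → (ℕ → ℝ) → ℝ) {n : ℕ} (X Y : Fin n → ℕ → ℝ) (θ : NNParams) : ℝ :=
  (n : ℝ)⁻¹ * ∑ a : Fin n, loss (truncOut σ m K θ (X a)) (Y a)

/-- Update a single weight coordinate. -/
def updW (θ : NNParams) (l i j : ℕ) (t : ℝ) : NNParams := fun l' =>
  if l' = l then ((fun i' j' => if i' = i ∧ j' = j then t else (θ l).1 i' j'), (θ l).2)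
  else θ l'

/-- Update a single bias coordinate. -/
def updB (θ : NNParams) (l i : ℕ) (t : ℝ) : NNParams := fun l' =>
  if l' = l then ((θ l).1, fun i' => if i' = i then t else (θ l).2 i') else θ l'

/-- `θ` is a critical point of `R` : all partial derivatives with respect to the valid
coordinates of the `(K+1)`-layer architecture with width function `m` vanish. -/
def IsCritical (R : NNParams → ℝ) (m : ℕ → ℕ) (K : ℕ) (θ : NNParams) : Prop :=
  (∀ l, l ≤ K → ∀ i, i < m (l + 1) → ∀ j, j < m l →
      deriv (fun t => R (updW θ l i j t)) ((θ l).1 i j) = 0) ∧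
  (∀ l, l ≤ K → ∀ i, i < m (l + 1) →
      deriv (fun t => R (updB θ l i t)) ((θ l).2 i) = 0)

/-- Equality of two parameter tuples on all valid coordinates of the architecture. -/
def ParamEqOn (m : ℕ → ℕ) (K : ℕ) (θ₁ θ₂ : NNParams) : Prop :=
  ∀ l, l ≤ K → ∀ i, i < m (l + 1) →
    (∀ j, j < m l → (θ₁ l).1 i j = (θ₂ l).1 i j) ∧ (θ₁ l).2 i = (θ₂ l).2 i

/-- Error vectors by reversed index: `errRev … t = z^{[K+1-t]}`, where `z^{[K+1]} = ∇ℓ`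
(represented by the function `dloss`) and `z^{[l]} = (W^{[l+1]})ᵀ (z^{[l+1]} ∘ g^{[l+1]})`. -/
noncomputable def errRev (σ : ℝ → ℝ) (m : ℕ → ℕ) (K : ℕ) (θ : NNParams)
    (dloss : (ℕ → ℝ) → (ℕ → ℝ) → ℕ → ℝ) (x y : ℕ → ℝ) : ℕ → ℕ → ℝ
  | 0 => dloss (truncOut σ m K θ x) y
  | t + 1 => fun j =>
      ∑ i ∈ Finset.range (m (K + 1 - t)),
        (θ (K - t)).1 i j *
          (errRev σ m K θ dloss x y t i * (if t = 0 then 1 else gFeat σ m θ x (K - t) i))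

/-- `e^{[l]} = z^{[l]} ∘ g^{[l]}` (with `g^{[K+1]} = 1`). -/
noncomputable def errE (σ : ℝ → ℝ) (m : ℕ → ℕ) (K : ℕ) (θ : NNParams)
    (dloss : (ℕ → ℝ) → (ℕ → ℝ) → ℕ → ℝ) (x y : ℕ → ℝ) (l i : ℕ) : ℝ :=
  errRev σ m K θ dloss x y (K + 1 - l) i *
    (if l = K + 1 then 1 else gFeat σ m θ x (l - 1) i)

/-- Differentiability of the loss in its first argument (on each finite-dimensional
coordinate block). -/
def LossDiff (loss : (ℕ → ℝ) → (ℕ → ℝ) → ℝ) : Prop :=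
  ∀ (y : ℕ → ℝ) (d : ℕ),
    Differentiable ℝ (fun u : Fin d → ℝ => loss (fun i => if h : i < d then u ⟨i, h⟩ else 0) y)

/-- Widths after adding one neuron in the paper's layer `p+1`. -/
def widen (m : ℕ → ℕ) (p : ℕ) : ℕ → ℕ := fun l => if l = p + 1 then m (p + 1) + 1 else m l

/-- One-step null embedding `T^α_{l,0}` at the paper's layer `l = p+1`. -/
def nullEmb (m : ℕ → ℕ) (p : ℕ) (α : ℝ) (θ : NNParams) : NNParams := fun l =>
  if l = p then
    ((fun i j => if i = m (p + 1) then 0 else (θ p).1 i j),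
     (fun i => if i = m (p + 1) then α else (θ p).2 i))
  else if l = p + 1 then
    ((fun i j => if j = m (p + 1) then 0 else (θ (p + 1)).1 i j), (θ (p + 1)).2)
  else θ l

/-- One-step splitting embedding `T^α_{l,s}` at the paper's layer `l = p+1`,
splitting neuron `s`. -/
def splitEmb (m : ℕ → ℕ) (p s : ℕ) (α : ℝ) (θ : NNParams) : NNParams := fun l =>
  if l = p then
    ((fun i j => if i = m (p + 1) then (θ p).1 s j else (θ p).1 i j),
     (fun i => if i = m (p + 1) then (θ p).2 s else (θ p).2 i))
  else if l = p + 1 then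
    ((fun i j =>
        if j = s then (1 - α) * (θ (p + 1)).1 i s
        else if j = m (p + 1) then α * (θ (p + 1)).1 i s
        else (θ (p + 1)).1 i j),
     (θ (p + 1)).2)
  else θ l

/-- The general compatible embedding `T^α_I` determined by a pull-back index mapping `I`
(`none` plays the role of the paper's index `0`), coefficient matrices `A` (the paper's
`α^{[l]}`) and bias coefficients `Ab` (the paper's `α_b^{[l]}`), using the paper's
conventions `(W^{[l]})_{0j} = (W^{[l]})_{i0} = 1` and `(b^{[l]})_0 = 0`. -/
noncomputable def genEmb (I : ℕ → ℕ → Option ℕ) (A : ℕ → ℕ → ℕ → ℝ) (Ab : ℕ → ℕ → ℝ)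
    (θ : NNParams) : NNParams := fun l =>
  ((fun i j =>
      A (l + 1) i j *
        (match I (l + 1) i, I l j with
          | some a, some b => (θ l).1 a b
          | _, _ => 1)),
   (fun i => Ab (l + 1) i +
      (match I (l + 1) i with
        | some a => (θ l).2 a
        | none => 0)))

section Backpropagation

variable {σ : ℝ → ℝ} {m : ℕ → ℕ} {K : ℕ} {θ : NNParams}
  {dloss : (ℕ → ℝ) → (ℕ → ℝ) → ℕ → ℝ} {x y : ℕ → ℝ}

lemma feat_congr {θ₁ θ₂ : NNParams} :
    ∀ {l}, (∀ p < l, θ₁ p = θ₂ p) → feat σ m θ₁ x l = feat σ m θ₂ x l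
  | 0, _ => rfl
  | l + 1, h => by
    have ih := feat_congr fun p hp => h p (Nat.lt_succ_of_lt hp)
    simp only [feat, ih, h l l.lt_succ_self]

/-- Tangent features: the derivative of `feat` when the pre-activations of layer-index `l`
move with velocity `u`. -/
noncomputable def dFeat (σ : ℝ → ℝ) (m : ℕ → ℕ) (θ : NNParams) (x u : ℕ → ℝ) (l : ℕ) :
    ℕ → ℕ → ℝ
  | 0 => 0
  | p + 1 => fun i =>
      gFeat σ m θ x p i *
        ((∑ j ∈ Finset.range (m p), (θ p).1 i j * dFeat σ m θ x u l p j) +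
          if p = l then u i else 0)

noncomputable def dPreact (σ : ℝ → ℝ) (m : ℕ → ℕ) (θ : NNParams) (x u : ℕ → ℝ)
    (l p i : ℕ) : ℝ :=
  (∑ j ∈ Finset.range (m p), (θ p).1 i j * dFeat σ m θ x u l p j) + if p = l then u i else 0

lemma dFeat_succ (u : ℕ → ℝ) (l p i : ℕ) :
    dFeat σ m θ x u l (p + 1) i = gFeat σ m θ x p i * dPreact σ m θ x u l p i := rfl

lemma dFeat_eq_zero (u : ℕ → ℝ) {l : ℕ} : ∀ {p}, p ≤ l → dFeat σ m θ x u l p = 0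
  | 0, _ => rfl
  | p + 1, hp => by
    funext i
    have ih : dFeat σ m θ x u l p = 0 := dFeat_eq_zero u (by omega)
    simp [dFeat_succ, dPreact, ih, show p ≠ l by omega]

lemma dPreact_self (u : ℕ → ℝ) (l i : ℕ) : dPreact σ m θ x u l l i = u i := by
  simp [dPreact, dFeat_eq_zero u le_rfl]

lemma dPreact_of_ne (u : ℕ → ℝ) {l p : ℕ} (h : p ≠ l) (i : ℕ) :
    dPreact σ m θ x u l p i = ∑ j ∈ Finset.range (m p), (θ p).1 i j * dFeat σ m θ x u l p j := by
  simp [dPreact, h]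

lemma hasDerivAt_preact_of_layer (hσ : Differentiable ℝ σ) {θt : ℝ → NNParams} {t₀ : ℝ}
    {l : ℕ} {u : ℕ → ℝ} (hθ : θt t₀ = θ) (hfix : ∀ t p, p ≠ l → θt t p = θ p)
    (hlayer : ∀ q, HasDerivAt
      (fun t => (∑ j ∈ Finset.range (m l), (θt t l).1 q j * feat σ m θ x l j) + (θt t l).2 q)
      (u q) t₀) :
    ∀ p q, HasDerivAt (fun t => preact σ m (θt t) x p q) (dPreact σ m θ x u l p q) t₀ := by
  have hpreact : ∀ p,
      (∀ j, HasDerivAt (fun t => feat σ m (θt t) x p j) (dFeat σ m θ x u l p j) t₀) →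
      ∀ q, HasDerivAt (fun t => preact σ m (θt t) x p q) (dPreact σ m θ x u l p q) t₀ := by
    intro p hfeat q
    by_cases hpl : p = l
    · subst hpl
      have hbelow : ∀ t, feat σ m (θt t) x p = feat σ m θ x p :=
        fun t => feat_congr fun p' hp' => hfix t p' hp'.ne
      simpa only [preact, hbelow, dPreact_self] using hlayer q
    · simp only [preact, hfix _ p hpl, dPreact_of_ne u hpl]
      exact (HasDerivAt.fun_sum fun j _ => (hfeat j).const_mul _).add_const _
  have hfeat : ∀ p j, HasDerivAt (fun t => feat σ m (θt t) x p j) (dFeat σ m θ x u l p j) t₀ := by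
    intro p
    induction p with
    | zero => exact fun j => hasDerivAt_const t₀ (x j)
    | succ p ih =>
      intro j
      have hσ' : HasDerivAt σ (gFeat σ m θ x p j) (preact σ m (θt t₀) x p j) := by
        rw [hθ]; exact (hσ _).hasDerivAt
      exact hσ'.comp t₀ (hpreact p ih j)
  exact fun p => hpreact p (hfeat p)

lemma errE_top (i : ℕ) :
    errE σ m K θ dloss x y (K + 1) i = dloss (truncOut σ m K θ x) y i := by
  simp [errE, errRev]

lemma errE_succ {l : ℕ} (hl : l + 1 ≤ K) (j : ℕ) :
    errE σ m K θ dloss x y (l + 1) j =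
      gFeat σ m θ x l j *
        ∑ i ∈ Finset.range (m (l + 2)), (θ (l + 1)).1 i j * errE σ m K θ dloss x y (l + 2) i := by
  obtain ⟨t, ht⟩ : ∃ t, K - l = t + 1 := ⟨K - l - 1, by omega⟩
  have h1 : K + 1 - (l + 1) = t + 1 := by omega
  have h2 : K + 1 - (l + 2) = t := by omega
  have h3 : K + 1 - t = l + 2 := by omega
  have h4 : K - t = l + 1 := by omega
  have h5 : (l + 2 = K + 1) ↔ t = 0 := by omega
  simp only [errE, h1, h2, errRev, h3, h4, h5, show l + 1 ≠ K + 1 by omega, if_false,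
    Nat.add_sub_cancel]
  exact mul_comm _ _

/-- Backpropagation: the error vectors `errE` are adjoint to the tangent pre-activations. -/
lemma sum_errE_mul_dPreact (u : ℕ → ℝ) {l p : ℕ} (hlp : l ≤ p) (hpK : p ≤ K) :
    ∑ k ∈ Finset.range (m (p + 1)), errE σ m K θ dloss x y (p + 1) k * dPreact σ m θ x u l p k =
      ∑ i ∈ Finset.range (m (l + 1)), errE σ m K θ dloss x y (l + 1) i * u i := by
  induction p, hlp using Nat.le_induction with
  | base => simp only [dPreact_self]
  | succ p hlp ih =>
    rw [← ih (by omega)]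
    simp only [dPreact_of_ne u (show p + 1 ≠ l by omega), dFeat_succ,
      errE_succ (by omega : p + 1 ≤ K), Finset.mul_sum, Finset.sum_mul]
    rw [Finset.sum_comm]
    exact Finset.sum_congr rfl fun j _ => Finset.sum_congr rfl fun k _ => by ring

end Backpropagation

/-- The `dloss` of `errRev`: the gradient of `loss · y` at `out` in the first `d` coordinates. -/
noncomputable def lossGrad (d : ℕ) (loss : (ℕ → ℝ) → (ℕ → ℝ) → ℝ) (out y : ℕ → ℝ) : ℕ → ℝ :=
  fun k => if h : k < d then
    fderiv ℝ (fun u : Fin d → ℝ => loss (fun i => if h : i < d then u ⟨i, h⟩ else 0) y)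
      (fun k' : Fin d => out k') (Pi.single ⟨k, h⟩ 1)
  else 0

lemma hasDerivAt_loss_truncate {loss : (ℕ → ℝ) → (ℕ → ℝ) → ℝ} (hloss : LossDiff loss)
    (y : ℕ → ℝ) {d : ℕ} {v : ℝ → ℕ → ℝ} {v' : ℕ → ℝ} {t₀ : ℝ}
    (hv : ∀ k < d, HasDerivAt (fun t => v t k) (v' k) t₀) :
    HasDerivAt (fun t => loss (fun k => if k < d then v t k else 0) y)
      (∑ k ∈ Finset.range d, lossGrad d loss (fun k => if k < d then v t₀ k else 0) y k * v' k)
      t₀ := by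
  have hw : HasDerivAt (fun t (k : Fin d) => v t k) (fun k => v' k) t₀ :=
    hasDerivAt_pi.mpr fun k => hv k k.isLt
  have hcomp := ((hloss y d) (fun k : Fin d => v t₀ k)).hasFDerivAt.comp_hasDerivAt t₀ hw
  have hv' : (fun k : Fin d => v' k) = ∑ k : Fin d, v' k • Pi.single k (1 : ℝ) := by
    ext k; simp [Pi.single_apply]
  rw [hv', map_sum] at hcomp
  have hval : ∑ k ∈ Finset.range d,
      lossGrad d loss (fun k => if k < d then v t₀ k else 0) y k * v' k =
      ∑ k : Fin d,
        fderiv ℝ (fun u : Fin d → ℝ => loss (fun i => if h : i < d then u ⟨i, h⟩ else 0) y)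
          (fun k => v t₀ k) (v' k • Pi.single k 1) := by
    rw [← Fin.sum_univ_eq_sum_range fun k => lossGrad d loss _ y k * v' k]
    refine Finset.sum_congr rfl fun k _ => ?_
    simp [lossGrad, map_smul, mul_comm]
  rw [hval]
  exact hcomp

lemma updW_self (θ : NNParams) (l i j : ℕ) : updW θ l i j ((θ l).1 i j) = θ := by
  funext p
  by_cases hp : p = l
  · subst hp
    ext i' j' <;> simp only [updW, if_true]
    split_ifs with h
    · rw [h.1, h.2]
    · rfl
  · simp [updW, hp]

lemma updB_self (θ : NNParams) (l i : ℕ) : updB θ l i ((θ l).2 i) = θ := by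
  funext p
  by_cases hp : p = l
  · subst hp
    ext i' <;> simp only [updB, if_true]
    split_ifs with h <;> simp [h]
  · simp [updB, hp]

section RiskDerivative

variable {σ : ℝ → ℝ} {m : ℕ → ℕ} {K : ℕ} {loss : (ℕ → ℝ) → (ℕ → ℝ) → ℝ} {n : ℕ}
  {X Y : Fin n → ℕ → ℝ} {θ : NNParams}

lemma hasDerivAt_risk_of_layer (hσ : Differentiable ℝ σ) (hloss : LossDiff loss)
    {θt : ℝ → NNParams} {t₀ : ℝ} {l : ℕ} (hl : l ≤ K) {u : Fin n → ℕ → ℝ}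
    (hθ : θt t₀ = θ) (hfix : ∀ t p, p ≠ l → θt t p = θ p)
    (hlayer : ∀ a q, HasDerivAt
      (fun t => (∑ j ∈ Finset.range (m l), (θt t l).1 q j * feat σ m θ (X a) l j) + (θt t l).2 q)
      (u a q) t₀) :
    HasDerivAt (fun t => risk σ m K loss X Y (θt t))
      ((n : ℝ)⁻¹ * ∑ a, ∑ i ∈ Finset.range (m (l + 1)),
        errE σ m K θ (lossGrad (m (K + 1)) loss) (X a) (Y a) (l + 1) i * u a i) t₀ := by
  have hsample : ∀ a, HasDerivAt (fun t => loss (truncOut σ m K (θt t) (X a)) (Y a))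
      (∑ i ∈ Finset.range (m (l + 1)),
        errE σ m K θ (lossGrad (m (K + 1)) loss) (X a) (Y a) (l + 1) i * u a i) t₀ := by
    intro a
    have h := hasDerivAt_loss_truncate hloss (Y a) (d := m (K + 1))
      (v := fun t => nnOut σ m K (θt t) (X a))
      fun k _ => hasDerivAt_preact_of_layer hσ hθ hfix (hlayer a) K k
    rw [← sum_errE_mul_dPreact _ hl le_rfl]
    simp only [hθ] at h
    simp only [errE_top]
    exact h
  exact (HasDerivAt.fun_sum fun a _ => hsample a).const_mul _

lemma deriv_risk_updW (hσ : Differentiable ℝ σ) (hloss : LossDiff loss) {l i j : ℕ}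
    (hl : l ≤ K) (hi : i < m (l + 1)) (hj : j < m l) :
    deriv (fun t => risk σ m K loss X Y (updW θ l i j t)) ((θ l).1 i j) =
      (n : ℝ)⁻¹ * ∑ a, errE σ m K θ (lossGrad (m (K + 1)) loss) (X a) (Y a) (l + 1) i *
        feat σ m θ (X a) l j := by
  have hlayer : ∀ a q, HasDerivAt (fun t => (∑ j' ∈ Finset.range (m l),
      (updW θ l i j t l).1 q j' * feat σ m θ (X a) l j') + (updW θ l i j t l).2 q)
      (if q = i then feat σ m θ (X a) l j else 0) ((θ l).1 i j) := by
    intro a q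
    have hterm : ∀ j' ∈ Finset.range (m l), HasDerivAt
        (fun t => (if q = i ∧ j' = j then t else (θ l).1 q j') * feat σ m θ (X a) l j')
        (if q = i ∧ j' = j then feat σ m θ (X a) l j' else 0) ((θ l).1 i j) := by
      intro j' _
      split_ifs
      · simpa using (hasDerivAt_id _).mul_const (feat σ m θ (X a) l j')
      · exact hasDerivAt_const _ _
    have hsum := (HasDerivAt.fun_sum hterm).add_const ((θ l).2 q)
    have hval : (∑ j' ∈ Finset.range (m l),
        if q = i ∧ j' = j then feat σ m θ (X a) l j' else 0) =
        if q = i then feat σ m θ (X a) l j else 0 := by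
      by_cases hq : q = i <;> simp [hq, hj]
    simpa [updW, hval] using hsum
  rw [(hasDerivAt_risk_of_layer hσ hloss hl (updW_self θ l i j)
    (fun t p hp => by simp [updW, hp]) hlayer).deriv]
  simp [mul_ite, hi]

lemma deriv_risk_updB (hσ : Differentiable ℝ σ) (hloss : LossDiff loss) {l i : ℕ}
    (hl : l ≤ K) (hi : i < m (l + 1)) :
    deriv (fun t => risk σ m K loss X Y (updB θ l i t)) ((θ l).2 i) =
      (n : ℝ)⁻¹ * ∑ a, errE σ m K θ (lossGrad (m (K + 1)) loss) (X a) (Y a) (l + 1) i := by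
  have hlayer : ∀ a q, HasDerivAt (fun t => (∑ j ∈ Finset.range (m l),
      (updB θ l i t l).1 q j * feat σ m θ (X a) l j) + (updB θ l i t l).2 q)
      (if q = i then 1 else 0) ((θ l).2 i) := by
    intro a q
    simp only [updB, if_true]
    split_ifs
    · exact (hasDerivAt_id _).const_add _
    · exact hasDerivAt_const _ _
  rw [(hasDerivAt_risk_of_layer hσ hloss hl (updB_self θ l i)
    (fun t p hp => by simp [updB, hp]) hlayer).deriv]
  simp [hi]

end RiskDerivative

lemma sum_range_eq_sum_none_add_sum_fiber {E : Type*} [AddCommMonoid E] {N M : ℕ}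
    (J : ℕ → Option ℕ) (hJ : ∀ j < N, ∀ s, J j = some s → s < M) (F : ℕ → E) :
    ∑ j ∈ Finset.range N, F j =
      ∑ j ∈ (Finset.range N).filter (fun j => J j = none), F j +
        ∑ s ∈ Finset.range M, ∑ j ∈ (Finset.range N).filter (fun j => J j = some s), F j := by
  have hmaps : ∀ j ∈ Finset.range N, J j ∈ Finset.insertNone (Finset.range M) := by
    intro j hj
    cases hJj : J j with
    | none => simp
    | some s => simpa using hJ j (Finset.mem_range.1 hj) s hJj
  rw [← Finset.sum_fiberwise_of_maps_to hmaps, Finset.sum_insertNone]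

section GenEmb

variable {K : ℕ} {m m' : ℕ → ℕ} {I : ℕ → ℕ → Option ℕ} {A : ℕ → ℕ → ℕ → ℝ} {Ab : ℕ → ℕ → ℝ}

lemma genEmb_weight_of_col_some (θ : NNParams) {l i j : ℕ} {s : ℕ} (hj : I l j = some s) :
    (genEmb I A Ab θ l).1 i j = A (l + 1) i j * (I (l + 1) i).elim 1 (fun a => (θ l).1 a s) := by
  cases hi : I (l + 1) i <;> simp [genEmb, hi, hj]

lemma genEmb_weight_of_col_none (θ : NNParams) {l i j : ℕ} (hj : I l j = none) :
    (genEmb I A Ab θ l).1 i j = A (l + 1) i j := by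
  cases hi : I (l + 1) i <;> simp [genEmb, hi, hj]

lemma genEmb_weight_of_row_some (θ : NNParams) {l i j : ℕ} {a : ℕ} (hi : I (l + 1) i = some a) :
    (genEmb I A Ab θ l).1 i j = A (l + 1) i j * (I l j).elim 1 (fun b => (θ l).1 a b) := by
  cases hj : I l j <;> simp [genEmb, hi, hj]

lemma genEmb_bias (θ : NNParams) (l i : ℕ) :
    (genEmb I A Ab θ l).2 i = Ab (l + 1) i + (I (l + 1) i).elim 0 (fun a => (θ l).2 a) := by
  cases hi : I (l + 1) i <;> simp [genEmb, hi]

lemma isLinearMap_genEmb_sub :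
    IsLinearMap ℝ (fun θ => genEmb I A Ab θ - genEmb I A Ab 0) := by
  constructor
  · intro θ₁ θ₂
    funext l
    ext i j <;> simp only [genEmb, Pi.add_apply, Pi.sub_apply, Prod.fst_add, Prod.fst_sub,
      Prod.snd_add, Prod.snd_sub] <;> split <;> simp [mul_add]
  · intro c θ
    funext l
    ext i j <;> simp only [genEmb, Pi.smul_apply, Pi.sub_apply, Prod.smul_fst, Prod.fst_sub,
      Prod.smul_snd, Prod.snd_sub, smul_eq_mul] <;> split <;> simp [mul_left_comm]

lemma paramEqOn_of_genEmb (hItot : ∀ l ≤ K + 1, ∀ s < m l, ∃ j < m' l, I l j = some s)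
    (hsum : ∀ l ≤ K, ∀ i < m' (l + 1), ∀ s < m l, I (l + 1) i ≠ none →
      ∑ j ∈ (Finset.range (m' l)).filter (fun j => I l j = some s), A (l + 1) i j = 1)
    {θ₁ θ₂ : NNParams} (h : ParamEqOn m' K (genEmb I A Ab θ₁) (genEmb I A Ab θ₂)) :
    ParamEqOn m K θ₁ θ₂ := by
  intro l hl i hi
  obtain ⟨i', hi', hIi'⟩ := hItot (l + 1) (by omega) i hi
  have hrow : ∀ (θ : NNParams) j, j < m l →
      ∑ j' ∈ (Finset.range (m' l)).filter (fun j' => I l j' = some j),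
        (genEmb I A Ab θ l).1 i' j' = (θ l).1 i j := by
    intro θ j hj
    rw [← one_mul ((θ l).1 i j), ← hsum l hl i' hi' j hj (by simp [hIi']), Finset.sum_mul]
    refine Finset.sum_congr rfl fun j' hj' => ?_
    rw [Finset.mem_filter] at hj'
    rw [genEmb_weight_of_row_some θ hIi', hj'.2, Option.elim_some]
  refine ⟨fun j hj => ?_, ?_⟩
  · rw [← hrow θ₁ j hj, ← hrow θ₂ j hj]
    exact Finset.sum_congr rfl fun j' hj' =>
      (h l hl i' hi').1 j' (Finset.mem_range.1 (Finset.mem_filter.1 hj').1)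
  · simpa [genEmb_bias, hIi'] using (h l hl i' hi').2

end GenEmb

/-- Compatibility conditions I (forward part) and II for `genEmb I A Ab`, shifted to the
layer-index convention of `NNParams`. A neuron `j` with `I l j = none` is a "null" neuron:
in the embedded network it outputs the constant `σ (bstar l j)`. -/
structure IsForwardCompatible (K : ℕ) (m m' : ℕ → ℕ) (σ : ℝ → ℝ) (I : ℕ → ℕ → Option ℕ)
    (A : ℕ → ℕ → ℕ → ℝ) (Ab bstar : ℕ → ℕ → ℝ) : Prop where
  input : ∀ j < m' 0, I 0 j = some j
  lt_of_eq_some : ∀ l ≤ K + 1, ∀ j < m' l, ∀ s, I l j = some s → s < m l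
  sum_fiber : ∀ l ≤ K, ∀ i < m' (l + 1), ∀ s < m l,
    (I (l + 1) i ≠ none →
      ∑ j ∈ (Finset.range (m' l)).filter (fun j => I l j = some s), A (l + 1) i j = 1) ∧
    (I (l + 1) i = none →
      ∑ j ∈ (Finset.range (m' l)).filter (fun j => I l j = some s), A (l + 1) i j = 0)
  bias_eq_zero : ∀ l ≤ K, ∀ i < m' (l + 1), I (l + 1) i ≠ none → Ab (l + 1) i = 0
  null_bias : ∀ l ≤ K, ∀ i < m' (l + 1), I (l + 1) i = none →
    ∑ j ∈ (Finset.range (m' l)).filter (fun j => I l j = none), A (l + 1) i j * σ (bstar l j) +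
      Ab (l + 1) i = bstar (l + 1) i
  null_input_sum : ∀ l ≤ K, ∀ i < m' (l + 1), I (l + 1) i ≠ none →
    ∑ j ∈ (Finset.range (m' l)).filter (fun j => I l j = none), A (l + 1) i j * σ (bstar l j) +
      Ab (l + 1) i = 0

/-- The backward part of compatibility condition I, with the paper's coefficients `β`. -/
structure IsBackwardCompatible (K : ℕ) (m m' : ℕ → ℕ) (I : ℕ → ℕ → Option ℕ)
    (A : ℕ → ℕ → ℕ → ℝ) (β : ℕ → ℕ → ℝ) : Prop where
  output : ∀ j < m' (K + 1), I (K + 1) j = some j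
  output_coeff : ∀ k < m' (K + 1), β (K + 1) k = 1
  sum_fiber : ∀ l ≤ K, ∀ j < m' l, ∀ k < m (l + 1),
    (∀ s, I l j = some s →
      ∑ i ∈ (Finset.range (m' (l + 1))).filter (fun i => I (l + 1) i = some k),
        β (l + 1) i * A (l + 1) i j = β l j) ∧
    (I l j = none →
      ∑ i ∈ (Finset.range (m' (l + 1))).filter (fun i => I (l + 1) i = some k),
        β (l + 1) i * A (l + 1) i j = 0)

section Correspondence

variable {K : ℕ} {m m' : ℕ → ℕ} {σ : ℝ → ℝ} {I : ℕ → ℕ → Option ℕ} {A : ℕ → ℕ → ℕ → ℝ}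
  {Ab bstar : ℕ → ℕ → ℝ} {θ : NNParams} {x : ℕ → ℝ}

lemma preact_genEmb_eq_fiberwise {l : ℕ} (hI : ∀ j < m' l, ∀ s, I l j = some s → s < m l)
    (hfeat : ∀ j < m' l,
      feat σ m' (genEmb I A Ab θ) x l j = (I l j).elim (σ (bstar l j)) (feat σ m θ x l))
    (i : ℕ) :
    preact σ m' (genEmb I A Ab θ) x l i =
      ∑ j ∈ (Finset.range (m' l)).filter (fun j => I l j = none), A (l + 1) i j * σ (bstar l j) +
      ∑ s ∈ Finset.range (m l),
        (∑ j ∈ (Finset.range (m' l)).filter (fun j => I l j = some s), A (l + 1) i j) *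
          ((I (l + 1) i).elim 1 (fun a => (θ l).1 a s) * feat σ m θ x l s) +
      (Ab (l + 1) i + (I (l + 1) i).elim 0 (fun a => (θ l).2 a)) := by
  rw [preact, sum_range_eq_sum_none_add_sum_fiber (I l) hI, genEmb_bias]
  congr 2
  · refine Finset.sum_congr rfl fun j hj => ?_
    rw [Finset.mem_filter, Finset.mem_range] at hj
    rw [genEmb_weight_of_col_none θ hj.2, hfeat j hj.1, hj.2, Option.elim_none]
  · refine Finset.sum_congr rfl fun s _ => ?_
    rw [Finset.sum_mul]
    refine Finset.sum_congr rfl fun j hj => ?_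
    rw [Finset.mem_filter, Finset.mem_range] at hj
    rw [genEmb_weight_of_col_some θ hj.2, hfeat j hj.1, hj.2, Option.elim_some, mul_assoc]

lemma preact_genEmb_of_feat (hF : IsForwardCompatible K m m' σ I A Ab bstar) {l : ℕ}
    (hl : l ≤ K)
    (hfeat : ∀ j < m' l,
      feat σ m' (genEmb I A Ab θ) x l j = (I l j).elim (σ (bstar l j)) (feat σ m θ x l))
    {i : ℕ} (hi : i < m' (l + 1)) :
    preact σ m' (genEmb I A Ab θ) x l i =
      (I (l + 1) i).elim (bstar (l + 1) i) (preact σ m θ x l) := by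
  rw [preact_genEmb_eq_fiberwise (hF.lt_of_eq_some l (by omega)) hfeat]
  have hsum := fun s hs => hF.sum_fiber l hl i hi s (Finset.mem_range.1 hs)
  cases hIi : I (l + 1) i with
  | none =>
    rw [Finset.sum_eq_zero (s := Finset.range (m l)) fun s hs => by
      rw [(hsum s hs).2 hIi, zero_mul]]
    simpa using hF.null_bias l hl i hi hIi
  | some a =>
    have hne : I (l + 1) i ≠ none := by simp [hIi]
    have hnullsum := hF.null_input_sum l hl i hi hne
    rw [hF.bias_eq_zero l hl i hi hne, add_zero] at hnullsum
    rw [Finset.sum_congr (s₁ := Finset.range (m l)) rfl fun s hs => by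
      rw [(hsum s hs).1 hne, one_mul], hnullsum, hF.bias_eq_zero l hl i hi hne]
    simp [preact]

lemma feat_genEmb (hF : IsForwardCompatible K m m' σ I A Ab bstar) :
    ∀ {l}, l ≤ K + 1 → ∀ j < m' l,
      feat σ m' (genEmb I A Ab θ) x l j = (I l j).elim (σ (bstar l j)) (feat σ m θ x l)
  | 0, _, j, hj => by rw [hF.input j hj, Option.elim_some]; rfl
  | l + 1, hl, j, hj => by
    have hpre := preact_genEmb_of_feat hF (by omega) (feat_genEmb hF (by omega)) hj
    change σ (preact σ m' (genEmb I A Ab θ) x l j) = _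
    rw [hpre]
    cases I (l + 1) j <;> rfl

lemma preact_genEmb (hF : IsForwardCompatible K m m' σ I A Ab bstar) {l : ℕ} (hl : l ≤ K)
    {i : ℕ} (hi : i < m' (l + 1)) :
    preact σ m' (genEmb I A Ab θ) x l i =
      (I (l + 1) i).elim (bstar (l + 1) i) (preact σ m θ x l) :=
  preact_genEmb_of_feat hF hl (feat_genEmb hF (by omega)) hi

lemma truncOut_genEmb (hF : IsForwardCompatible K m m' σ I A Ab bstar)
    (hout : ∀ j < m' (K + 1), I (K + 1) j = some j) (hwidth : m' (K + 1) = m (K + 1)) :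
    truncOut σ m' K (genEmb I A Ab θ) x = truncOut σ m K θ x := by
  funext k
  unfold truncOut nnOut
  split_ifs with hk hk' hk'
  · rw [preact_genEmb hF le_rfl hk, hout k hk, Option.elim_some]
  · omega
  · omega
  · rfl

lemma sum_genEmb_weight_mul_eq_fiberwise {β : ℕ → ℕ → ℝ} (θ : NNParams) {l j : ℕ}
    {e e' : ℕ → ℝ} (hI : ∀ i < m' (l + 1), ∀ a, I (l + 1) i = some a → a < m (l + 1))
    (he' : ∀ i < m' (l + 1), e' i = (I (l + 1) i).elim 0 (fun a => β (l + 1) i * e a)) :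
    ∑ i ∈ Finset.range (m' (l + 1)), (genEmb I A Ab θ l).1 i j * e' i =
      ∑ a ∈ Finset.range (m (l + 1)),
        (∑ i ∈ (Finset.range (m' (l + 1))).filter (fun i => I (l + 1) i = some a),
          β (l + 1) i * A (l + 1) i j) * ((I l j).elim 1 (fun b => (θ l).1 a b) * e a) := by
  rw [sum_range_eq_sum_none_add_sum_fiber (I (l + 1)) hI]
  have hnull : ∑ i ∈ (Finset.range (m' (l + 1))).filter (fun i => I (l + 1) i = none),
      (genEmb I A Ab θ l).1 i j * e' i = 0 := by
    refine Finset.sum_eq_zero fun i hi => ?_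
    rw [Finset.mem_filter, Finset.mem_range] at hi
    rw [he' i hi.1, hi.2, Option.elim_none, mul_zero]
  rw [hnull, zero_add]
  refine Finset.sum_congr rfl fun a _ => ?_
  rw [Finset.sum_mul]
  refine Finset.sum_congr rfl fun i hi => ?_
  rw [Finset.mem_filter, Finset.mem_range] at hi
  rw [genEmb_weight_of_row_some θ hi.2, he' i hi.1, hi.2, Option.elim_some]
  ring

lemma errE_genEmb {β : ℕ → ℕ → ℝ} {dloss : (ℕ → ℝ) → (ℕ → ℝ) → ℕ → ℝ} {y : ℕ → ℝ}
    (hF : IsForwardCompatible K m m' σ I A Ab bstar) (hB : IsBackwardCompatible K m m' I A β)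
    (hwidth : m' (K + 1) = m (K + 1)) {l : ℕ} (hl : l ≤ K) :
    ∀ i < m' (l + 1), errE σ m' K (genEmb I A Ab θ) dloss x y (l + 1) i =
      (I (l + 1) i).elim 0 (fun s => β (l + 1) i * errE σ m K θ dloss x y (l + 1) s) := by
  induction hl using Nat.decreasingInduction with
  | self =>
    intro i hi
    rw [hB.output i hi, Option.elim_some, errE_top, errE_top, truncOut_genEmb hF hB.output hwidth,
      hB.output_coeff i hi, one_mul]
  | of_succ l hl ih =>
    intro j hj
    rw [errE_succ (by omega),
      sum_genEmb_weight_mul_eq_fiberwise θ (hF.lt_of_eq_some (l + 2) (by omega)) ih]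
    have hsum := fun a ha => hB.sum_fiber (l + 1) (by omega) j hj a (Finset.mem_range.1 ha)
    cases hIj : I (l + 1) j with
    | none =>
      rw [Finset.sum_eq_zero fun a ha => by rw [(hsum a ha).2 hIj, zero_mul], mul_zero,
        Option.elim_none]
    | some b =>
      rw [Finset.sum_congr rfl fun a ha => by rw [(hsum a ha).1 b hIj],
        ← Finset.mul_sum, gFeat, preact_genEmb hF (by omega) hj, hIj]
      simp only [Option.elim_some]
      rw [errE_succ (by omega), gFeat]
      ring

theorem isCritical_genEmb {β : ℕ → ℕ → ℝ} (hσ : Differentiable ℝ σ)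
    (hwidth : m' (K + 1) = m (K + 1)) (hF : IsForwardCompatible K m m' σ I A Ab bstar)
    (hB : IsBackwardCompatible K m m' I A β) {loss : (ℕ → ℝ) → (ℕ → ℝ) → ℝ}
    (hloss : LossDiff loss) {n : ℕ} {X Y : Fin n → ℕ → ℝ}
    (hcrit : IsCritical (risk σ m K loss X Y) m K θ) :
    IsCritical (risk σ m' K loss X Y) m' K (genEmb I A Ab θ) := by
  obtain ⟨hcritW, hcritB⟩ := hcrit
  refine ⟨fun l hl i hi j hj => ?_, fun l hl i hi => ?_⟩
  · rw [deriv_risk_updW hσ hloss hl hi hj, hwidth]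
    simp only [errE_genEmb hF hB hwidth hl i hi, feat_genEmb hF (by omega : l ≤ K + 1) j hj]
    cases hIi : I (l + 1) i with
    | none => simp
    | some s =>
      have hs := hF.lt_of_eq_some (l + 1) (by omega) i hi s hIi
      cases hIj : I l j with
      | none =>
        have hbs := hcritB l hl s hs
        rw [deriv_risk_updB hσ hloss hl hs] at hbs
        simp only [Option.elim_some, Option.elim_none]
        rw [← Finset.sum_mul, ← Finset.mul_sum]
        linear_combination β (l + 1) i * σ (bstar l j) * hbs
      | some b =>
        have hb := hF.lt_of_eq_some l (by omega) j hj b hIj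
        have hWs := hcritW l hl s hs b hb
        rw [deriv_risk_updW hσ hloss hl hs hb] at hWs
        simp only [Option.elim_some, mul_assoc]
        rw [← Finset.mul_sum]
        linear_combination β (l + 1) i * hWs
  · rw [deriv_risk_updB hσ hloss hl hi, hwidth]
    simp only [errE_genEmb hF hB hwidth hl i hi]
    cases hIi : I (l + 1) i with
    | none => simp
    | some s =>
      have hs := hF.lt_of_eq_some (l + 1) (by omega) i hi s hIi
      have hbs := hcritB l hl s hs
      rw [deriv_risk_updB hσ hloss hl hs] at hbs
      simp only [Option.elim_some]
      rw [← Finset.mul_sum]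
      linear_combination β (l + 1) i * hbs

end Correspondence

theorem general_compatible_embedding_is_critical_embedding_general
    (K : ℕ) (m m' : ℕ → ℕ) (σ : ℝ → ℝ) (hσ : Differentiable ℝ σ)
    (hLtop : m' (K + 1) = m (K + 1))
    -- total index mapping
    (I : ℕ → ℕ → Option ℕ)
    (hI0 : ∀ j, j < m' 0 → I 0 j = some j)
    (hIL : ∀ j, j < m' (K + 1) → I (K + 1) j = some j)
    (hIval : ∀ l, l ≤ K + 1 → ∀ j, j < m' l → ∀ s, I l j = some s → s < m l)
    (hItot : ∀ l, l ≤ K + 1 → ∀ s, s < m l → ∃ j, j < m' l ∧ I l j = some s)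
    (A : ℕ → ℕ → ℕ → ℝ) (Ab : ℕ → ℕ → ℝ) (β : ℕ → ℕ → ℝ) (bstar : ℕ → ℕ → ℝ)
    -- compatibility conditions I
    (hβtop : ∀ k, k < m' (K + 1) → β (K + 1) k = 1)
    (hfwd : ∀ l, 1 ≤ l → l ≤ K + 1 → ∀ i, i < m' l → ∀ s, s < m (l - 1) →
        (I l i ≠ none →
          ∑ j ∈ (Finset.range (m' (l - 1))).filter (fun j => I (l - 1) j = some s),
            A l i j = 1) ∧
        (I l i = none →
          ∑ j ∈ (Finset.range (m' (l - 1))).filter (fun j => I (l - 1) j = some s),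
            A l i j = 0))
    (hbwd : ∀ l, 1 ≤ l → l ≤ K + 1 → ∀ j, j < m' (l - 1) → ∀ k, k < m l →
        (∀ s, I (l - 1) j = some s →
          ∑ i ∈ (Finset.range (m' l)).filter (fun i => I l i = some k),
            β l i * A l i j = β (l - 1) j) ∧
        (I (l - 1) j = none →
          ∑ i ∈ (Finset.range (m' l)).filter (fun i => I l i = some k),
            β l i * A l i j = 0))
    -- compatibility conditions II
    (hAb0 : ∀ l, 1 ≤ l → l ≤ K + 1 → ∀ i, i < m' l → I l i ≠ none → Ab l i = 0)
    (hnull : ∀ l, 1 ≤ l → l ≤ K + 1 → ∀ i, i < m' l → I l i = none →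
        (∑ j ∈ (Finset.range (m' (l - 1))).filter (fun j => I (l - 1) j = none),
          A l i j * σ (bstar (l - 1) j)) + Ab l i = bstar l i)
    (heff : ∀ l, 1 ≤ l → l ≤ K + 1 → ∀ i, i < m' l → I l i ≠ none →
        (∑ j ∈ (Finset.range (m' (l - 1))).filter (fun j => I (l - 1) j = none),
          A l i j * σ (bstar (l - 1) j)) + Ab l i = 0) :
    -- (i) injectivity
    (∀ θ₁ θ₂ : NNParams,
        ParamEqOn m' K (genEmb I A Ab θ₁) (genEmb I A Ab θ₂) →
        ParamEqOn m K θ₁ θ₂) ∧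
    -- (ii) affinity
    IsLinearMap ℝ (fun θ : NNParams => genEmb I A Ab θ - genEmb I A Ab 0) ∧
    -- (iii) criticality preservation
    (∀ loss : (ℕ → ℝ) → (ℕ → ℝ) → ℝ, LossDiff loss →
      ∀ (n : ℕ) (X Y : Fin n → ℕ → ℝ) (θ : NNParams),
        IsCritical (risk σ m K loss X Y) m K θ →
        IsCritical (risk σ m' K loss X Y) m' K (genEmb I A Ab θ)) := by
  have hF : IsForwardCompatible K m m' σ I A Ab bstar :=
    ⟨hI0, hIval, fun l _ => hfwd (l + 1) (by omega) (by omega),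
      fun l _ => hAb0 (l + 1) (by omega) (by omega), fun l _ => hnull (l + 1) (by omega) (by omega),
      fun l _ => heff (l + 1) (by omega) (by omega)⟩
  have hB : IsBackwardCompatible K m m' I A β :=
    ⟨hIL, hβtop, fun l _ => hbwd (l + 1) (by omega) (by omega)⟩
  refine ⟨fun θ₁ θ₂ => paramEqOn_of_genEmb hItot fun l hl i hi s hs =>
    (hF.sum_fiber l hl i hi s hs).1, isLinearMap_genEmb_sub,
    fun loss hloss n X Y θ => isCritical_genEmb hσ hLtop hF hB hloss⟩

/-- the general compatible embedding is injective (between the parameter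
spaces, i.e. on the valid coordinates), affine, and criticality preserving. -/
theorem general_compatible_embedding_is_critical_embedding
    (K : ℕ) (hK : 1 ≤ K) (m m' : ℕ → ℕ) (σ : ℝ → ℝ) (hσ : Differentiable ℝ σ)
    (h0 : m' 0 = m 0) (hLtop : m' (K + 1) = m (K + 1)) (hge : ∀ l, m l ≤ m' l)
    -- total index mapping
    (I : ℕ → ℕ → Option ℕ)
    (hI0 : ∀ j, j < m' 0 → I 0 j = some j)
    (hIL : ∀ j, j < m' (K + 1) → I (K + 1) j = some j)
    (hIval : ∀ l, l ≤ K + 1 → ∀ j, j < m' l → ∀ s, I l j = some s → s < m l)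
    (hItot : ∀ l, l ≤ K + 1 → ∀ s, s < m l → ∃ j, j < m' l ∧ I l j = some s)
    (A : ℕ → ℕ → ℕ → ℝ) (Ab : ℕ → ℕ → ℝ) (β : ℕ → ℕ → ℝ) (bstar : ℕ → ℕ → ℝ)
    -- compatibility conditions I
    (hβtop : ∀ k, k < m' (K + 1) → β (K + 1) k = 1)
    (hfwd : ∀ l, 1 ≤ l → l ≤ K + 1 → ∀ i, i < m' l → ∀ s, s < m (l - 1) →
        (I l i ≠ none →
          ∑ j ∈ (Finset.range (m' (l - 1))).filter (fun j => I (l - 1) j = some s),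
            A l i j = 1) ∧
        (I l i = none →
          ∑ j ∈ (Finset.range (m' (l - 1))).filter (fun j => I (l - 1) j = some s),
            A l i j = 0))
    (hbwd : ∀ l, 1 ≤ l → l ≤ K + 1 → ∀ j, j < m' (l - 1) → ∀ k, k < m l →
        (∀ s, I (l - 1) j = some s →
          ∑ i ∈ (Finset.range (m' l)).filter (fun i => I l i = some k),
            β l i * A l i j = β (l - 1) j) ∧
        (I (l - 1) j = none →
          ∑ i ∈ (Finset.range (m' l)).filter (fun i => I l i = some k),
            β l i * A l i j = 0))
    -- compatibility conditions II
    (hAb0 : ∀ l, 1 ≤ l → l ≤ K + 1 → ∀ i, i < m' l → I l i ≠ none → Ab l i = 0)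
    (hnull : ∀ l, 1 ≤ l → l ≤ K + 1 → ∀ i, i < m' l → I l i = none →
        (∑ j ∈ (Finset.range (m' (l - 1))).filter (fun j => I (l - 1) j = none),
          A l i j * σ (bstar (l - 1) j)) + Ab l i = bstar l i)
    (heff : ∀ l, 1 ≤ l → l ≤ K + 1 → ∀ i, i < m' l → I l i ≠ none →
        (∑ j ∈ (Finset.range (m' (l - 1))).filter (fun j => I (l - 1) j = none),
          A l i j * σ (bstar (l - 1) j)) + Ab l i = 0) :
    -- (i) injectivity
    (∀ θ₁ θ₂ : NNParams,
        ParamEqOn m' K (genEmb I A Ab θ₁) (genEmb I A Ab θ₂) →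
        ParamEqOn m K θ₁ θ₂) ∧
    -- (ii) affinity
    IsLinearMap ℝ (fun θ : NNParams => genEmb I A Ab θ - genEmb I A Ab 0) ∧
    -- (iii) criticality preservation
    (∀ loss : (ℕ → ℝ) → (ℕ → ℝ) → ℝ, LossDiff loss →
      ∀ (n : ℕ) (X Y : Fin n → ℕ → ℝ) (θ : NNParams),
        IsCritical (risk σ m K loss X Y) m K θ →
        IsCritical (risk σ m' K loss X Y) m' K (genEmb I A Ab θ)) :=
  general_compatible_embedding_is_critical_embedding_general K m m' σ hσ hLtop I hI0 hIL hIval hItot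
    A Ab β bstar hβtop hfwd hbwd hAb0 hnull heff

end EmbeddingPrinciple
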